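/- The function f is continuous on (−μ, 1−μ), f(x) → −∞ as x → −μ from the right, and f(x) → +∞ as x → (1−μ) from the left. Consequently there exists a collinear equilibrium point x₁ ∈ (−μ, 1−μ) with f(x₁) = 0. -/

import Mathlib

/-!
Near `-μ` the term `-(1-μ) q₁ (x+μ)/|x+μ|³` behaves like `-(1-μ) q₁ / (x+μ)²` and dominates,
while every other term stays bounded; near `1-μ` the term `-μ (x+μ-1)/|x+μ-1|³` behaves like
`μ / (1-μ-x)²`, the oblateness term has the same sign and the rest stays bounded. A continuous
function on an open interval going from `-∞` to `+∞` vanishes somewhere in it.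
-/

open Set Filter Topology

/-- Collinear equilibrium function of the generalized photogravitational
Chermnykh problem. -/
noncomputable def fcol (μ q₁ A₂ Mb T n x : ℝ) : ℝ :=
  n ^ 2 * x
    - (1 - μ) * q₁ * (x + μ) / |x + μ| ^ 3
    - μ * (x + μ - 1) / |x + μ - 1| ^ 3
    - (3 / 2) * μ * A₂ * (x + μ - 1) / |x + μ - 1| ^ 5
    - Mb * x / (x ^ 2 + T ^ 2) ^ ((3 : ℝ) / 2)

section OrderedGroup

variable {G : Type*} [AddCommGroup G] [LinearOrder G] [IsOrderedAddMonoid G] [TopologicalSpace G]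
  [OrderTopology G]

lemma tendsto_add_const_nhdsGT (a c : G) : Tendsto (· + c) (𝓝[>] a) (𝓝[>] (a + c)) :=
  tendsto_nhdsWithin_iff.2 ⟨((continuous_add_const c).tendsto a).mono_left nhdsWithin_le_nhds,
    eventually_nhdsWithin_of_forall fun _ hx => add_lt_add_left hx c⟩

lemma tendsto_add_const_nhdsLT (a c : G) : Tendsto (· + c) (𝓝[<] a) (𝓝[<] (a + c)) :=
  tendsto_nhdsWithin_iff.2 ⟨((continuous_add_const c).tendsto a).mono_left nhdsWithin_le_nhds,
    eventually_nhdsWithin_of_forall fun _ hx => add_lt_add_left hx c⟩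

end OrderedGroup

section OrderedField

variable {𝕜 : Type*} [Field 𝕜] [LinearOrder 𝕜] [IsStrictOrderedRing 𝕜] [TopologicalSpace 𝕜]
  [OrderTopology 𝕜]

lemma tendsto_pow_nhdsGT_zero {m : ℕ} (hm : m ≠ 0) :
    Tendsto (fun y : 𝕜 => y ^ m) (𝓝[>] 0) (𝓝[>] 0) := by
  refine tendsto_nhdsWithin_iff.2
    ⟨?_, eventually_nhdsWithin_of_forall fun y (hy : 0 < y) => mem_Ioi.2 (pow_pos hy m)⟩
  simpa [hm] using ((continuous_pow m).tendsto (0 : 𝕜)).mono_left nhdsWithin_le_nhds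

variable {k : ℕ}

lemma tendsto_self_div_abs_pow_nhdsGT_zero (hk : 1 < k) :
    Tendsto (fun y : 𝕜 => y / |y| ^ k) (𝓝[>] 0) atTop := by
  refine (tendsto_pow_nhdsGT_zero (m := k - 1) (by omega)).inv_tendsto_nhdsGT_zero.congr' ?_
  filter_upwards [self_mem_nhdsWithin] with y (hy : 0 < y)
  obtain ⟨m, rfl⟩ := Nat.exists_eq_add_of_lt hk
  simp only [Pi.inv_apply, abs_of_pos hy, show 1 + m + 1 - 1 = m + 1 by omega]
  field_simp
  ring

lemma tendsto_self_div_abs_pow_nhdsLT_zero (hk : 1 < k) :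
    Tendsto (fun y : 𝕜 => y / |y| ^ k) (𝓝[<] 0) atBot := by
  have hneg := tendsto_neg_nhdsLT (a := (0 : 𝕜))
  rw [neg_zero] at hneg
  rw [← tendsto_neg_atTop_iff]
  simpa [Function.comp_def, neg_div] using (tendsto_self_div_abs_pow_nhdsGT_zero hk).comp hneg

end OrderedField

section Fcol

variable {μ q₁ A₂ Mb T n : ℝ}

lemma continuousAt_fcol (hT : T ≠ 0) {x : ℝ} (h₁ : x + μ ≠ 0) (h₂ : x + μ - 1 ≠ 0) :
    ContinuousAt (fcol μ q₁ A₂ Mb T n) x := by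
  unfold fcol
  fun_prop (disch := first | positivity | simpa)

lemma tendsto_fcol_nhdsGT (hμ : μ < 1) (hq : 0 < q₁) (hT : T ≠ 0) :
    Tendsto (fcol μ q₁ A₂ Mb T n) (𝓝[>] (-μ)) atBot := by
  have hsing : Tendsto (fun x => (x + μ) / |x + μ| ^ 3) (𝓝[>] (-μ)) atTop :=
    (tendsto_self_div_abs_pow_nhdsGT_zero (by norm_num)).comp
      (by simpa using tendsto_add_const_nhdsGT (-μ) μ)
  have hreg : ContinuousAt (fun x => n ^ 2 * x - μ * (x + μ - 1) / |x + μ - 1| ^ 3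
      - 3 / 2 * μ * A₂ * (x + μ - 1) / |x + μ - 1| ^ 5
      - Mb * x / (x ^ 2 + T ^ 2) ^ ((3 : ℝ) / 2)) (-μ) := by
    fun_prop (disch := first | positivity | norm_num)
  have hcoef : -((1 - μ) * q₁) < 0 := neg_neg_of_pos (mul_pos (by linarith) hq)
  refine ((hsing.const_mul_atTop_of_neg hcoef).atBot_add
    (hreg.tendsto.mono_left nhdsWithin_le_nhds)).congr fun x => ?_
  unfold fcol
  ring

lemma tendsto_fcol_nhdsLT (hμ : 0 < μ) (hA : 0 ≤ A₂) (hT : T ≠ 0) :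
    Tendsto (fcol μ q₁ A₂ Mb T n) (𝓝[<] (1 - μ)) atTop := by
  have hshift : Tendsto (fun x => x + μ - 1) (𝓝[<] (1 - μ)) (𝓝[<] 0) := by
    simpa [add_sub_assoc] using tendsto_add_const_nhdsLT (1 - μ) (μ - 1)
  have hsing : Tendsto (fun x => (x + μ - 1) / |x + μ - 1| ^ 3) (𝓝[<] (1 - μ)) atBot :=
    (tendsto_self_div_abs_pow_nhdsLT_zero (by norm_num)).comp hshift
  have hreg : ContinuousAt (fun x => n ^ 2 * x - (1 - μ) * q₁ * (x + μ) / |x + μ| ^ 3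
      - Mb * x / (x ^ 2 + T ^ 2) ^ ((3 : ℝ) / 2)) (1 - μ) := by
    fun_prop (disch := first | positivity | norm_num)
  have hobl : ∀ᶠ x in 𝓝[<] (1 - μ),
      0 ≤ -(3 / 2 * μ * A₂) * ((x + μ - 1) / |x + μ - 1| ^ 5) := by
    filter_upwards [hshift self_mem_nhdsWithin] with x (hx : x + μ - 1 < 0)
    exact mul_nonneg_of_nonpos_of_nonpos (by nlinarith) (div_nonpos_of_nonpos_of_nonneg hx.le
      (by positivity))
  refine (tendsto_atTop_add_right_of_le' _ 0 ((hreg.tendsto.mono_left nhdsWithin_le_nhds).add_atTop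
    (hsing.const_mul_atBot_of_neg (neg_neg_of_pos hμ))) hobl).congr fun x => ?_
  unfold fcol
  ring

end Fcol

theorem collinear_point_middle_general
    (μ q₁ A₂ Mb T n : ℝ)
    (hμ0 : 0 < μ) (hμ1 : μ < 1 / 2) (hq0 : 0 < q₁)
    (hA : 0 ≤ A₂) (hT : 0 < T) :
    ContinuousOn (fcol μ q₁ A₂ Mb T n) (Set.Ioo (-μ) (1 - μ)) ∧
    Filter.Tendsto (fcol μ q₁ A₂ Mb T n)
      (nhdsWithin (-μ) (Set.Ioi (-μ))) Filter.atBot ∧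
    Filter.Tendsto (fcol μ q₁ A₂ Mb T n)
      (nhdsWithin (1 - μ) (Set.Iio (1 - μ))) Filter.atTop ∧
    ∃ x₁ ∈ Set.Ioo (-μ) (1 - μ), fcol μ q₁ A₂ Mb T n x₁ = 0 := by
  have hcont : ContinuousOn (fcol μ q₁ A₂ Mb T n) (Ioo (-μ) (1 - μ)) := fun x hx =>
    (continuousAt_fcol hT.ne' (by linarith [hx.1] : 0 < x + μ).ne'
      (by linarith [hx.2] : x + μ - 1 < 0).ne).continuousWithinAt
  have hbot : Tendsto (fcol μ q₁ A₂ Mb T n) (𝓝[>] (-μ)) atBot :=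
    tendsto_fcol_nhdsGT (by linarith) hq0 hT.ne'
  have htop : Tendsto (fcol μ q₁ A₂ Mb T n) (𝓝[<] (1 - μ)) atTop :=
    tendsto_fcol_nhdsLT hμ0 hA hT.ne'
  have hne : -μ < 1 - μ := by linarith
  obtain ⟨x₁, hx₁, hzero⟩ := hcont.surjOn_of_tendsto (nonempty_Ioo.2 hne)
    ((tendsto_comp_coe_Ioo_atBot hne).2 hbot) ((tendsto_comp_coe_Ioo_atTop hne).2 htop)
    (mem_univ 0)
  exact ⟨hcont, hbot, htop, x₁, hx₁, hzero⟩

/-- On `(-μ, 1-μ)` the function `f` is continuous, tends to `-∞` as `x → -μ⁺` and to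
`+∞` as `x → (1-μ)⁻`; consequently there is a collinear equilibrium point
`x₁ ∈ (-μ, 1-μ)`. -/
theorem collinear_point_middle
    (μ q₁ A₂ Mb T n : ℝ)
    (hμ0 : 0 < μ) (hμ1 : μ < 1 / 2) (hq0 : 0 < q₁) (hq1 : q₁ ≤ 1)
    (hA : 0 ≤ A₂) (hM : 0 ≤ Mb) (hT : 0 < T) (hn : 0 < n) :
    ContinuousOn (fcol μ q₁ A₂ Mb T n) (Set.Ioo (-μ) (1 - μ)) ∧
    Filter.Tendsto (fcol μ q₁ A₂ Mb T n)
      (nhdsWithin (-μ) (Set.Ioi (-μ))) Filter.atBot ∧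
    Filter.Tendsto (fcol μ q₁ A₂ Mb T n)
      (nhdsWithin (1 - μ) (Set.Iio (1 - μ))) Filter.atTop ∧
    ∃ x₁ ∈ Set.Ioo (-μ) (1 - μ), fcol μ q₁ A₂ Mb T n x₁ = 0 :=
  collinear_point_middle_general μ q₁ A₂ Mb T n hμ0 hμ1 hq0 hA hT
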